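/- arXiv:1912.06714 — 2 statements merged into one kernel-verified Lean document; each statement's English description precedes it below -/
import Mathlib

section
/- Let (x_k)_{k≥0} be a nonnegative, monotone nonincreasing real sequence and let G = {k : x_k < 2·x_{k+1}}. Then for all n ≥ 0, ∑_{k=0}^{n} x_k ≤ 3·x_0 + 3·∑_{k∈G, k≤n} x_{k+1}. -/
/-!
Termwise, `x k ≤ 2 (x k - x (k+1)) + 3 x (k+1)` when `k` is good (as `x k + x (k+1) ≥ 0`) and
`x k ≤ 2 (x k - x (k+1))` otherwise (as `x k ≥ 2 x (k+1)`). Summing, the first terms telescope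
to `2 (x 0 - x (n+1)) ≤ 2 x 0`.
-/

lemma le_two_mul_sub_add_ite {a b : ℝ} (hab : 0 ≤ a + b) :
    a ≤ 2 * (a - b) + 3 * (if a < 2 * b then b else 0) := by
  split_ifs with h
  · linarith
  · linarith [not_lt.mp h]

lemma sum_range_le_two_mul_sub_add_sum_filter (x : ℕ → ℝ) (hnn : ∀ k, 0 ≤ x k) (m : ℕ) :
    ∑ k ∈ Finset.range m, x k ≤
      2 * (x 0 - x m) + 3 * ∑ k ∈ (Finset.range m).filter (fun k => x k < 2 * x (k + 1)),
        x (k + 1) := by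
  calc ∑ k ∈ Finset.range m, x k
      ≤ ∑ k ∈ Finset.range m,
          (2 * (x k - x (k + 1)) + 3 * (if x k < 2 * x (k + 1) then x (k + 1) else 0)) :=
        Finset.sum_le_sum fun k _ => le_two_mul_sub_add_ite (add_nonneg (hnn k) (hnn (k + 1)))
    _ = 2 * (x 0 - x m) + 3 * ∑ k ∈ (Finset.range m).filter (fun k => x k < 2 * x (k + 1)),
          x (k + 1) := by
        rw [Finset.sum_add_distrib, ← Finset.mul_sum, ← Finset.mul_sum, Finset.sum_range_sub',
          Finset.sum_filter]

theorem stmt0_general (x : ℕ → ℝ) (hnn : ∀ k, 0 ≤ x k) (n : ℕ) :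
    ∑ k ∈ Finset.range (n + 1), x k ≤
      3 * x 0 + 3 * ∑ k ∈ (Finset.range (n + 1)).filter (fun k => x k < 2 * x (k + 1)), x (k + 1) := by
  linarith [sum_range_le_two_mul_sub_add_sum_filter x hnn (n + 1), hnn 0, hnn (n + 1)]

theorem stmt0 (x : ℕ → ℝ) (hnn : ∀ k, 0 ≤ x k) (hmono : ∀ k, x (k + 1) ≤ x k) (n : ℕ) :
    ∑ k ∈ Finset.range (n + 1), x k ≤
      3 * x 0 + 3 * ∑ k ∈ (Finset.range (n + 1)).filter (fun k => x k < 2 * x (k + 1)), x (k + 1) :=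
  stmt0_general x hnn n
end

section
/- Let (x_k)_{k≥0} be nonnegative and nonincreasing with ∑_k x_k = ∞, and let G = {k : x_k < 2·x_{k+1}}. Then ∑_{k∈G} x_{k+1} = ∞. -/
/-!
At a bad index `x (k+1) ≤ x k / 2`, so for every `k`, `x (k+1)` is at most the `k`-th term of
the good subseries plus `x k / 2`. Summing, the series of `x` is bounded by `x 0`, the good
subseries and half of itself, hence converges if the good subseries does.
-/

open Finset

/-- Partial sums satisfy `S (n+1) ≤ a 0 + B + c S n`, and `S n ≤ S (n+1)` closes the recursion. -/
theorem summable_of_succ_le_add_mul {a b : ℕ → ℝ} {c : ℝ} (ha : ∀ k, 0 ≤ a k)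
    (hb : ∀ k, 0 ≤ b k) (hbs : Summable b) (hc : c < 1)
    (hab : ∀ k, a (k + 1) ≤ b k + c * a k) : Summable a := by
  refine summable_of_sum_range_le ha (c := (a 0 + ∑' k, b k) / (1 - c)) fun n => ?_
  have hstep : ∑ k ∈ range (n + 1), a k ≤ a 0 + ∑' k, b k + c * ∑ k ∈ range n, a k :=
    calc ∑ k ∈ range (n + 1), a k = a 0 + ∑ k ∈ range n, a (k + 1) := by
          rw [sum_range_succ']; ring
      _ ≤ a 0 + (∑ k ∈ range n, b k + c * ∑ k ∈ range n, a k) := by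
          rw [mul_sum, ← sum_add_distrib]; gcongr with k; exact hab k
      _ ≤ a 0 + ∑' k, b k + c * ∑ k ∈ range n, a k := by
          linarith [hbs.sum_le_tsum (range n) (fun k _ => hb k)]
  have hmono : ∑ k ∈ range n, a k ≤ ∑ k ∈ range (n + 1), a k := by
    rw [sum_range_succ]; linarith [ha n]
  rw [le_div_iff₀ (by linarith)]
  linarith

theorem succ_le_ite_add_half {x : ℕ → ℝ} (hnn : ∀ k, 0 ≤ x k) (k : ℕ) :
    x (k + 1) ≤ (if x k < 2 * x (k + 1) then x (k + 1) else 0) + 1 / 2 * x k := by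
  split_ifs with h
  · linarith [hnn k]
  · linarith

theorem stmt10_general (x : ℕ → ℝ) (hnn : ∀ k, 0 ≤ x k)
    (hdiv : ¬ Summable x) :
    ¬ Summable (fun k => if x k < 2 * x (k + 1) then x (k + 1) else 0) :=
  fun hgood => hdiv <| summable_of_succ_le_add_mul hnn
    (fun k => by split_ifs <;> simp [hnn]) hgood (by norm_num) (succ_le_ite_add_half hnn)

theorem stmt10 (x : ℕ → ℝ) (hnn : ∀ k, 0 ≤ x k) (hmono : ∀ k, x (k + 1) ≤ x k)
    (hdiv : ¬ Summable x) :
    ¬ Summable (fun k => if x k < 2 * x (k + 1) then x (k + 1) else 0) :=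
  stmt10_general x hnn hdiv
end
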